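/- Let n = 2, m ≥ 3, and 1 ≤ k < m−1. Then β_{m−1} ≱_PS β_k; that is, there exists a profile of 2 preferences over m candidates at which the k-Borda rule β_k is manipulable but the Borda rule β_{m−1} is not manipulable. -/

import Mathlib

/-- A preference order on `m` candidates: `σ c` is the position of candidate `c`
(position `0` is the most preferred). `σ c < σ d` means `c` is strictly preferred to `d`. -/
abbrev Pref (m : ℕ) := Fin m ≃ Fin m

/-- A voting rule for `n` voters and `m` candidates. -/
abbrev Rule (m n : ℕ) := (Fin n → Pref m) → Fin m

/-- Total score of candidate `c` under score vector `s` (indexed by position) at profile `P`. -/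
def score {m n : ℕ} (s : Fin m → ℕ) (P : Fin n → Pref m) (c : Fin m) : ℕ :=
  ∑ v, s (P v c)

/-- The scoring rule with score vector `s`: the winner is the candidate that is first in the
lexicographic tie-breaking order (i.e. has the least index) among those of maximal score. -/
def winner {m n : ℕ} [NeZero m] (s : Fin m → ℕ) (P : Fin n → Pref m) : Fin m :=
  (Finset.univ.filter fun c => ∀ d, score s P d ≤ score s P c).min' (by
    obtain ⟨c, -, hc⟩ := Finset.exists_max_image Finset.univ (score s P) Finset.univ_nonempty
    exact ⟨c, Finset.mem_filter.mpr ⟨Finset.mem_univ c, fun d => hc d (Finset.mem_univ d)⟩⟩)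

/-- `k`-approval, `α_k`: one point for each of the top `k` positions. -/
def approval (m n k : ℕ) [NeZero m] : Rule m n :=
  winner (fun r => if (r : ℕ) < k then 1 else 0)

/-- `k`-Borda, `β_k`: `max (0, k - r + 1)` points for (`1`-indexed) position `r`, i.e. `k - r`
(truncated subtraction) points for `0`-indexed position `r`. -/
def kBorda (m n k : ℕ) [NeZero m] : Rule m n :=
  winner (fun r => k - (r : ℕ))

/-- `f` is manipulable at profile `P`: some voter `v` can misreport some preference `Q` and
obtain an outcome strictly preferred (by `v`'s true preferences) to the sincere outcome. -/
def Manipulable {m n : ℕ} (f : Rule m n) (P : Fin n → Pref m) : Prop :=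
  ∃ (v : Fin n) (Q : Pref m), P v (f (Function.update P v Q)) < P v (f P)

/-- `f ≥_PS g` : every profile at which `g` is manipulable is one at which `f` is manipulable. -/
def MoreManip {m n : ℕ} (f g : Rule m n) : Prop :=
  ∀ P : Fin n → Pref m, Manipulable g P → Manipulable f P

/-! Candidates are `0, …, M + 2`. Voter `0` ranks `1 ≻ 0 ≻ 3 ≻ ⋯ ≻ M+2 ≻ 2` and voter `1`
ranks `2 ≻ 0 ≻ 3 ≻ ⋯ ≻ M+2 ≻ 1`, so `0`, second for both, wins under Borda and under `β_k`,
`k ≥ 2`. Under Borda a voter can only gain by electing their favourite. Voter `1` cannot lift `2`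
above `1`, as voter `0` ranks them last and first; voter `0` can lift `1` above `0` only by
ranking `1` first and `0` last, but then `2` outscores `1`. Under `β_k`, `2 ≤ k ≤ M + 1`, voter `0`
reports voter `1`'s ranking reversed, which pushes `0` below the scoring positions and elects `1`
by tie-breaking. Under plurality `1` wins by tie-breaking, and voter `1` elects `0` by ranking it
first. -/

section Winner

variable {m n : ℕ} [NeZero m] (s : Fin m → ℕ) (P : Fin n → Pref m)

lemma score_le_score_winner (d : Fin m) : score s P d ≤ score s P (winner s P) :=
  (Finset.mem_filter.mp (Finset.min'_mem _ _ :
    winner s P ∈ Finset.univ.filter fun c => ∀ d, score s P d ≤ score s P c)).2 d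

lemma winner_le_of_forall_score_le {c : Fin m} (hc : ∀ d, score s P d ≤ score s P c) :
    winner s P ≤ c :=
  Finset.min'_le _ _ (Finset.mem_filter.mpr ⟨Finset.mem_univ c, hc⟩)

lemma winner_eq_iff (c : Fin m) :
    winner s P = c ↔
      (∀ d, score s P d ≤ score s P c) ∧ ∀ d < c, score s P d < score s P c := by
  constructor
  · rintro rfl
    refine ⟨score_le_score_winner s P, fun d hd => ?_⟩
    by_contra! h
    exact hd.not_ge (winner_le_of_forall_score_le s P fun e =>
      (score_le_score_winner s P e).trans h)
  · rintro ⟨hmax, hfirst⟩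
    refine le_antisymm (winner_le_of_forall_score_le s P hmax) (not_lt.mp fun hlt => ?_)
    exact (hfirst _ hlt).not_ge (score_le_score_winner s P c)

end Winner

lemma score_pair {m : ℕ} (s : Fin m → ℕ) (A B : Pref m) (c : Fin m) :
    score s ![A, B] c = s (A c) + s (B c) := by
  simp [score, Fin.sum_univ_two]

lemma update_pair_zero {α : Type*} (a b c : α) : Function.update ![a, b] 0 c = ![c, b] := by
  funext i; fin_cases i <;> simp

lemma update_pair_one {α : Type*} (a b c : α) : Function.update ![a, b] 1 c = ![a, c] := by
  funext i; fin_cases i <;> simp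

lemma Pref.eq_of_lt_of_val_eq_one {m : ℕ} {σ : Pref m} {c d t : Fin m} (hc : (σ c : ℕ) = 1)
    (ht : (σ t : ℕ) = 0) (h : σ d < σ c) : d = t :=
  σ.injective (Fin.ext (by rw [Fin.lt_def, hc] at h; omega))

namespace BordaProfile

variable (M : ℕ)

def sincere₁ : Pref (M + 3) :=
  ((Equiv.swap 0 2).trans (Equiv.swap 0 1)).trans (Equiv.subRight 1)

def sincere₀ : Pref (M + 3) := (Equiv.swap 1 2).trans (sincere₁ M)

def misreport₀ : Pref (M + 3) := (sincere₁ M).trans Fin.revPerm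

def misreport₁ : Pref (M + 3) := (sincere₁ M).trans (Equiv.swap 0 1)

lemma sincere₁_val (c : Fin (M + 3)) :
    (sincere₁ M c : ℕ) =
      if (c : ℕ) = 2 then 0 else if (c : ℕ) = 0 then 1 else if (c : ℕ) = 1 then M + 2
      else (c : ℕ) - 1 := by
  simp only [sincere₁, Equiv.trans_apply, Equiv.subRight_apply, Fin.coe_sub_one,
    Equiv.swap_apply_def]
  split_ifs <;> simp only [Fin.ext_iff, Fin.val_zero, Fin.val_one, Fin.val_two,
    not_true_eq_false] at * <;> omega

lemma sincere₀_val (c : Fin (M + 3)) :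
    (sincere₀ M c : ℕ) =
      if (c : ℕ) = 1 then 0 else if (c : ℕ) = 0 then 1 else if (c : ℕ) = 2 then M + 2
      else (c : ℕ) - 1 := by
  simp only [sincere₀, Equiv.trans_apply, Equiv.swap_apply_def, Fin.ext_iff, Fin.val_one,
    Fin.val_two]
  split_ifs <;> rw [sincere₁_val] <;> split_ifs <;>
    simp only [Fin.val_one, Fin.val_two, not_true_eq_false] at * <;> omega

lemma misreport₀_val (c : Fin (M + 3)) : (misreport₀ M c : ℕ) = M + 2 - sincere₁ M c := by
  simp only [misreport₀, Equiv.trans_apply, Fin.revPerm_apply, Fin.val_rev]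
  omega

lemma misreport₁_val (c : Fin (M + 3)) :
    (misreport₁ M c : ℕ) =
      if (c : ℕ) = 2 then 1 else if (c : ℕ) = 0 then 0 else if (c : ℕ) = 1 then M + 2
      else (c : ℕ) - 1 := by
  simp only [misreport₁, Equiv.trans_apply, Equiv.swap_apply_def]
  split_ifs <;> simp only [Fin.ext_iff, sincere₁_val, Fin.val_zero, Fin.val_one] at * <;>
    split_ifs at * <;> omega

variable {M}

lemma kBorda_sincere (k : ℕ) (hk : 2 ≤ k) (hkM : k ≤ M + 2) :
    kBorda (M + 3) 2 k ![sincere₀ M, sincere₁ M] = 0 := by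
  refine (winner_eq_iff _ _ _).mpr ⟨fun d => ?_, fun d hd => absurd hd (Fin.not_lt_zero d)⟩
  simp only [score_pair, sincere₀_val, sincere₁_val, Fin.val_zero]
  split_ifs <;> omega

lemma plurality_sincere : kBorda (M + 3) 2 1 ![sincere₀ M, sincere₁ M] = 1 := by
  refine (winner_eq_iff _ _ _).mpr ⟨fun d => ?_, fun d hd => ?_⟩ <;>
    simp only [score_pair, sincere₀_val, sincere₁_val, Fin.val_one, Fin.lt_def,
      Nat.reduceEqDiff, ↓reduceIte] at * <;>
    split_ifs <;> omega

lemma kBorda_misreport₀ (k : ℕ) (hk : 2 ≤ k) (hkM : k ≤ M + 1) :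
    kBorda (M + 3) 2 k ![misreport₀ M, sincere₁ M] = 1 := by
  refine (winner_eq_iff _ _ _).mpr ⟨fun d => ?_, fun d hd => ?_⟩ <;>
    simp only [score_pair, misreport₀_val, sincere₁_val, Fin.val_one, Fin.lt_def,
      Nat.reduceEqDiff, ↓reduceIte] at * <;>
    split_ifs <;> omega

lemma plurality_misreport₁ : kBorda (M + 3) 2 1 ![sincere₀ M, misreport₁ M] = 0 := by
  refine (winner_eq_iff _ _ _).mpr ⟨fun d => ?_, fun d hd => absurd hd (Fin.not_lt_zero d)⟩
  simp only [score_pair, sincere₀_val, misreport₁_val, Fin.val_zero]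
  split_ifs <;> omega

lemma borda_update_zero_ne_one (Q : Pref (M + 3)) :
    kBorda (M + 3) 2 (M + 2) ![Q, sincere₁ M] ≠ 1 := by
  -- beating `0` forces `Q` to rank `1` first and `0` last, and then `2` outscores `1`
  intro h
  obtain ⟨hmax, hfirst⟩ := (winner_eq_iff _ _ _).mp h
  have h2 := hmax 2
  have h0 := hfirst 0 (by rw [Fin.lt_def, Fin.val_zero, Fin.val_one]; omega)
  have hQ : Q 0 ≠ Q 2 :=
    Q.injective.ne (by rw [Ne, Fin.ext_iff, Fin.val_zero, Fin.val_two]; omega)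
  rw [Ne, Fin.ext_iff] at hQ
  have := (Q 0).isLt
  simp only [score_pair, sincere₁_val, Fin.val_zero, Fin.val_one, Fin.val_two, Nat.reduceEqDiff,
    ↓reduceIte] at h0 h2
  omega

lemma borda_update_one_ne_two (Q : Pref (M + 3)) :
    kBorda (M + 3) 2 (M + 2) ![sincere₀ M, Q] ≠ 2 := by
  -- voter `0` ranks `2` last and `1` first, so `2` cannot outscore `1`
  intro h
  have h1 := ((winner_eq_iff _ _ _).mp h).2 1
    (by rw [Fin.lt_def, Fin.val_one, Fin.val_two]; omega)
  simp only [score_pair, sincere₀_val, Fin.val_one, Fin.val_two, Nat.reduceEqDiff,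
    ↓reduceIte] at h1
  omega

theorem kBorda_manipulable (k : ℕ) (hk : 1 ≤ k) (hkM : k ≤ M + 1) :
    Manipulable (kBorda (M + 3) 2 k) ![sincere₀ M, sincere₁ M] := by
  obtain rfl | hk2 := hk.eq_or_lt
  · refine ⟨1, misreport₁ M, ?_⟩
    simp [update_pair_one, plurality_sincere, plurality_misreport₁, Fin.lt_def, sincere₁_val]
  · refine ⟨0, misreport₀ M, ?_⟩
    rw [update_pair_zero, kBorda_misreport₀ k hk2 hkM,
      kBorda_sincere (M := M) k hk2 (by omega)]
    simp [Fin.lt_def, sincere₀_val]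

theorem borda_not_manipulable :
    ¬ Manipulable (kBorda (M + 3) 2 (M + 2)) ![sincere₀ M, sincere₁ M] := by
  rw [Manipulable, Fin.exists_fin_two]
  rintro (⟨Q, hlt⟩ | ⟨Q, hlt⟩) <;> rw [kBorda_sincere (M + 2) (by omega) le_rfl] at hlt
  · rw [update_pair_zero] at hlt
    exact borda_update_zero_ne_one Q
      (Pref.eq_of_lt_of_val_eq_one (by simp [sincere₀_val]) (by simp [sincere₀_val]) hlt)
  · rw [update_pair_one] at hlt
    exact borda_update_one_ne_two Q
      (Pref.eq_of_lt_of_val_eq_one (by simp [sincere₁_val]) (by simp [sincere₁_val]) hlt)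

end BordaProfile

/-- For `n = 2`, `m ≥ 3` and `1 ≤ k < m-1`: `β_{m-1} ≱_PS β_k`. -/
theorem stmt_19 (m k : ℕ) [NeZero m] (hm : 3 ≤ m) (hk : 1 ≤ k) (hkm : k < m - 1) :
    ∃ P : Fin 2 → Pref m,
      Manipulable (kBorda m 2 k) P ∧ ¬ Manipulable (kBorda m 2 (m - 1)) P := by
  obtain ⟨M, rfl⟩ : ∃ M, m = M + 3 := ⟨m - 3, by omega⟩
  exact ⟨_, BordaProfile.kBorda_manipulable k hk (by omega),
    BordaProfile.borda_not_manipulable⟩
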